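/- arXiv:2208.01914 — 4 statements merged into one kernel-verified Lean document; each statement's English description precedes it below -/
import Mathlib

section
/- Let G be a finite simple graph on a vertex set V with |V| = n ≥ 4 and with m edges, and let c = (c_1, …, c_s) be a profile. Under the random coloring model with profile c, for every color i ∈ {1, …, s} the variance of the number of i-monochromatic edges is Var(M_i) = m·(c_i^(2)/n^(2))·(1 − m·c_i^(2)/n^(2)) + 2·[ (c_i^(3)/n^(3) − c_i^(4)/n^(4))·π₃(G) + (c_i^(4)/n^(4))·binom(m,2) ]. -/
open Finset

/-- The set of colorings of `V` with `s` colors and profile `c` (fiber of color `i` has `c i`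
vertices). -/
def profileColorings (V : Type*) [Fintype V] [DecidableEq V] (s : ℕ) (c : Fin s → ℕ) :
    Finset (V → Fin s) :=
  Finset.univ.filter fun f => ∀ i, (Finset.univ.filter fun v => f v = i).card = c i

/-- `monoEdges G f i` is the number of edges of `G` both of whose endpoints get color `i`
under `f`. -/
def monoEdges {V : Type*} [Fintype V] [DecidableEq V] (G : SimpleGraph V) [DecidableRel G.Adj]
    {s : ℕ} (f : V → Fin s) (i : Fin s) : ℕ :=
  (G.edgeFinset.filter fun e => ∀ v ∈ e, f v = i).card

/-- Number of unordered pairs of distinct edges of `G` sharing a vertex. -/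
def pi3 {V : Type*} [Fintype V] [DecidableEq V] (G : SimpleGraph V) [DecidableRel G.Adj] : ℕ :=
  ((G.edgeFinset.powersetCard 2).filter fun p => ∃ v, ∀ e ∈ p, v ∈ e).card

/-- The invariant `γ(G)`. -/
noncomputable def gammaG {V : Type*} [Fintype V] [DecidableEq V] (G : SimpleGraph V)
    [DecidableRel G.Adj] : ℝ :=
  2 / ((Fintype.card V).descFactorial 4) * ((G.edgeFinset.card.choose 2 : ℝ) - pi3 G)
    - ((G.edgeFinset.card : ℝ) / ((Fintype.card V).descFactorial 2)) ^ 2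

/-- Expectation under the uniform measure on colorings of profile `c` (random coloring model). -/
noncomputable def expect (V : Type*) [Fintype V] [DecidableEq V] {s : ℕ} (c : Fin s → ℕ)
    (X : (V → Fin s) → ℝ) : ℝ :=
  (∑ f ∈ profileColorings V s c, X f) / (profileColorings V s c).card
section Aux

variable {V : Type*} [Fintype V] [DecidableEq V] {s : ℕ}

lemma comp_perm_mem (c : Fin s → ℕ) (σ : Equiv.Perm V) {f : V → Fin s}
    (hf : f ∈ profileColorings V s c) : (f ∘ σ) ∈ profileColorings V s c := by
  simp only [profileColorings, mem_filter, mem_univ, true_and] at hf ⊢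
  intro j
  rw [← hf j]
  exact Finset.card_equiv σ (fun v => by simp)

/-- count of colorings monochromatic `i` on `S` -/
def cnt (c : Fin s → ℕ) (i : Fin s) (S : Finset V) : ℕ :=
  ((profileColorings V s c).filter fun f => ∀ v ∈ S, f v = i).card

lemma cnt_congr (c : Fin s → ℕ) (i : Fin s) {S T : Finset V} (h : S.card = T.card) :
    cnt c i S = cnt c i T := by
  classical
  have e₁ : {x // x ∈ S} ≃ {x // x ∈ T} :=
    Fintype.equivOfCardEq (by simp [Fintype.card_coe, h])
  have e₂ : {x // ¬ x ∈ S} ≃ {x // ¬ x ∈ T} :=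
    Fintype.equivOfCardEq (by
      rw [Fintype.card_subtype_compl, Fintype.card_subtype_compl]
      simp [Fintype.card_coe, h])
  set σ : Equiv.Perm V := Equiv.subtypeCongr e₁ e₂ with hσ
  have hP : ∀ v, v ∈ S ↔ σ v ∈ T := by
    intro v
    by_cases hv : v ∈ S
    · simp only [hσ, Equiv.subtypeCongr]
      simp [hv, (e₁ ⟨v, hv⟩).2]
    · simp only [hσ, Equiv.subtypeCongr]
      simp [hv, (e₂ ⟨v, hv⟩).2]
  have hP' : ∀ v, σ.symm v ∈ S ↔ v ∈ T := fun v => by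
    rw [hP (σ.symm v), Equiv.apply_symm_apply]
  apply Finset.card_nbij' (fun f => f ∘ σ.symm) (fun g => g ∘ σ)
  · intro f hf
    simp only [Finset.mem_coe, mem_filter] at hf ⊢
    exact ⟨comp_perm_mem c σ.symm hf.1, fun v hv => hf.2 _ ((hP' v).2 hv)⟩
  · intro g hg
    simp only [Finset.mem_coe, mem_filter] at hg ⊢
    exact ⟨comp_perm_mem c σ hg.1, fun v hv => hg.2 _ ((hP v).1 hv)⟩
  · intro f _; ext v; simp
  · intro g _; ext v; simp

lemma cnt_sum (c : Fin s → ℕ) (i : Fin s) (k : ℕ) :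
    ∑ S ∈ Finset.univ.powersetCard k, cnt (V := V) c i S
      = (profileColorings V s c).card * (c i).choose k := by
  classical
  have h1 : ∀ S : Finset V, cnt c i S
      = ∑ f ∈ profileColorings V s c, if (∀ v ∈ S, f v = i) then 1 else 0 := by
    intro S; rw [cnt, Finset.card_filter]
  simp only [h1]
  rw [Finset.sum_comm]
  have key : ∀ f ∈ profileColorings V s c,
      (∑ S ∈ Finset.univ.powersetCard k, if (∀ v ∈ S, f v = i) then 1 else 0)
        = (c i).choose k := by
    intro f hf
    have hf' : (Finset.univ.filter fun v => f v = i).card = c i := by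
      simp only [profileColorings, mem_filter, mem_univ, true_and] at hf
      exact hf i
    rw [← Finset.sum_filter, Finset.sum_const, smul_eq_mul, mul_one]
    have heq : (Finset.univ.powersetCard k).filter (fun S => ∀ v ∈ S, f v = i)
        = (Finset.univ.filter fun v => f v = i).powersetCard k := by
      ext S
      simp only [mem_filter, mem_powersetCard, subset_univ, true_and, Finset.subset_iff,
        mem_univ]
      tauto
    rw [heq, Finset.card_powersetCard, hf']
  rw [Finset.sum_congr rfl key, Finset.sum_const, smul_eq_mul]

lemma cnt_mul_choose (c : Fin s → ℕ) (i : Fin s) {S : Finset V} {k : ℕ} (hS : S.card = k) :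
    cnt c i S * (Fintype.card V).choose k = (profileColorings V s c).card * (c i).choose k := by
  classical
  rw [← cnt_sum c i k]
  rw [Finset.sum_congr rfl (fun T hT => cnt_congr c i (((mem_powersetCard_univ).1 hT).trans hS.symm))]
  rw [Finset.sum_const, smul_eq_mul, card_powersetCard, card_univ, mul_comm]

lemma cnt_real (c : Fin s → ℕ) (i : Fin s) {S : Finset V} {k : ℕ} (hS : S.card = k)
    (hk : k ≤ Fintype.card V) :
    (cnt c i S : ℝ) = (profileColorings V s c).card *
      ((c i).descFactorial k / ((Fintype.card V).descFactorial k)) := by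
  have h := cnt_mul_choose c i hS
  have h2 : cnt c i S * (Fintype.card V).descFactorial k
      = (profileColorings V s c).card * (c i).descFactorial k := by
    rw [Nat.descFactorial_eq_factorial_mul_choose, Nat.descFactorial_eq_factorial_mul_choose]
    rw [← mul_assoc, ← mul_assoc, mul_comm (cnt c i S) (Nat.factorial k),
      mul_comm _ (Nat.factorial k), mul_assoc, mul_assoc, h]
  have hpos : ((Fintype.card V).descFactorial k : ℝ) ≠ 0 := by
    have : (Fintype.card V).descFactorial k ≠ 0 := fun h0 => by
      have := Nat.descFactorial_eq_zero_iff_lt.1 h0; omega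
    exact_mod_cast this
  field_simp
  exact_mod_cast h2

lemma profile_nonempty (c : Fin s → ℕ) (hsum : ∑ i, c i = Fintype.card V) :
    (profileColorings V s c).Nonempty := by
  classical
  have e : V ≃ (Σ i : Fin s, Fin (c i)) :=
    Fintype.equivOfCardEq (by simp [Fintype.card_sigma, hsum])
  refine ⟨fun v => (e v).1, ?_⟩
  simp only [profileColorings, mem_filter, mem_univ, true_and]
  intro j
  have h1 : (Finset.univ.filter fun v => (e v).1 = j).card
      = (Finset.univ.filter fun x : Σ i : Fin s, Fin (c i) => x.1 = j).card :=
    Finset.card_equiv e (fun v => by simp)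
  rw [h1, ← Fintype.card_subtype]
  have e2 : {x : Σ i : Fin s, Fin (c i) // x.1 = j} ≃ Fin (c j) :=
    { toFun := fun x => Fin.cast (by rw [x.2]) x.1.2
      invFun := fun b => ⟨⟨j, b⟩, rfl⟩
      left_inv := by rintro ⟨⟨i, b⟩, h⟩; subst h; rfl
      right_inv := fun b => rfl }
  rw [Fintype.card_congr e2, Fintype.card_fin]

def eS (e : Sym2 V) : Finset V := Finset.univ.filter (· ∈ e)

lemma forall_mem_eS (e : Sym2 V) {f : V → Fin s} {i : Fin s} :
    (∀ v ∈ eS e, f v = i) ↔ (∀ v ∈ e, f v = i) := by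
  simp [eS]

variable (G : SimpleGraph V) [DecidableRel G.Adj]

lemma card_eS {e : Sym2 V} (he : e ∈ G.edgeFinset) : (eS e).card = 2 := by
  induction e with
  | _ a b =>
    have hadj : G.Adj a b := by rwa [SimpleGraph.mem_edgeFinset, SimpleGraph.mem_edgeSet] at he
    have : eS (V := V) s(a, b) = {a, b} := by ext v; simp [eS, Sym2.mem_iff]
    rw [this, Finset.card_pair hadj.ne]

lemma card_eS_union_shares {e e' : Sym2 V} (he : e ∈ G.edgeFinset) (he' : e' ∈ G.edgeFinset)
    (hne : e ≠ e') (hsh : ∃ v, v ∈ e ∧ v ∈ e') : (eS e ∪ eS e').card = 3 := by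
  obtain ⟨v, hv, hv'⟩ := hsh
  obtain ⟨x, rfl⟩ := Sym2.mem_iff_exists.1 hv
  obtain ⟨y, rfl⟩ := Sym2.mem_iff_exists.1 hv'
  have hadj : G.Adj v x := by rwa [SimpleGraph.mem_edgeFinset, SimpleGraph.mem_edgeSet] at he
  have hadj' : G.Adj v y := by rwa [SimpleGraph.mem_edgeFinset, SimpleGraph.mem_edgeSet] at he'
  have hxy : x ≠ y := fun h => hne (by rw [h])
  have : eS (V := V) s(v, x) ∪ eS s(v, y) = {v, x, y} := by
    ext w; simp [eS, Sym2.mem_iff]; tauto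
  rw [this]
  rw [Finset.card_insert_of_notMem (by simp [hadj.ne, hadj'.ne]),
    Finset.card_pair hxy]

lemma card_eS_union_disj {e e' : Sym2 V} (he : e ∈ G.edgeFinset) (he' : e' ∈ G.edgeFinset)
    (hsh : ¬ ∃ v, v ∈ e ∧ v ∈ e') : (eS e ∪ eS e').card = 4 := by
  push_neg at hsh
  have hdisj : Disjoint (eS e) (eS (V := V) e') := by
    rw [Finset.disjoint_left]
    intro v hv hv'
    simp only [eS, mem_filter, mem_univ, true_and] at hv hv'
    exact hsh v hv hv'
  rw [Finset.card_union_of_disjoint hdisj, card_eS G he, card_eS G he']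

lemma share_pairs_card :
    (G.edgeFinset.offDiag.filter fun p => ∃ v, v ∈ p.1 ∧ v ∈ p.2).card = 2 * pi3 G := by
  classical
  have hset : (G.edgeFinset.offDiag.filter fun p => ∃ v, v ∈ p.1 ∧ v ∈ p.2)
      = ((G.edgeFinset.powersetCard 2).filter fun p => ∃ v, ∀ e ∈ p, v ∈ e).biUnion
          Finset.offDiag := by
    ext q
    simp only [mem_biUnion, mem_filter, mem_offDiag, mem_powersetCard]
    constructor
    · rintro ⟨⟨h1, h2, hne⟩, v, hv1, hv2⟩
      refine ⟨{q.1, q.2}, ⟨⟨fun x hx => ?_, Finset.card_pair hne⟩, v, fun e he => ?_⟩, ?_⟩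
      · simp only [mem_insert, mem_singleton] at hx
        rcases hx with h | h <;> simp [h, h1, h2]
      · simp only [mem_insert, mem_singleton] at he
        rcases he with h | h <;> simp [h, hv1, hv2]
      · simp [Finset.mem_offDiag, hne]
    · rintro ⟨p, ⟨⟨hsub, hcard⟩, v, hv⟩, hq⟩
      exact ⟨⟨hsub hq.1, hsub hq.2.1, hq.2.2⟩, v, hv _ hq.1, hv _ hq.2.1⟩
  rw [hset, Finset.card_biUnion, pi3, Finset.sum_congr rfl
    (fun p hp => show p.offDiag.card = 2 by
      rw [Finset.offDiag_card, (Finset.mem_powersetCard.1 (Finset.mem_filter.1 hp).1).2]),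
    Finset.sum_const, smul_eq_mul, mul_comm]
  · intro p1 h1 p2 h2 hne
    rw [Function.onFun, Finset.disjoint_left]
    intro q hq1 hq2
    rw [Finset.mem_offDiag] at hq1 hq2
    have c1 := (Finset.mem_powersetCard.1 (Finset.mem_filter.1 h1).1).2
    have c2 := (Finset.mem_powersetCard.1 (Finset.mem_filter.1 h2).1).2
    have e1 : ({q.1, q.2} : Finset (Sym2 V)) = p1 :=
      Finset.eq_of_subset_of_card_le
        (by intro x hx; simp only [mem_insert, mem_singleton] at hx
            rcases hx with h | h <;> simp [h, hq1.1, hq1.2.1])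
        (by rw [Finset.card_pair hq1.2.2, c1])
    have e2 : ({q.1, q.2} : Finset (Sym2 V)) = p2 :=
      Finset.eq_of_subset_of_card_le
        (by intro x hx; simp only [mem_insert, mem_singleton] at hx
            rcases hx with h | h <;> simp [h, hq2.1, hq2.2.1])
        (by rw [Finset.card_pair hq2.2.2, c2])
    exact hne (e1 ▸ e2)

end Aux

set_option maxHeartbeats 2000000 in
/-- Under the random coloring model with profile `c`, the variance of the number of
`i`-monochromatic edges is
`m·(cᵢ⁽²⁾/n⁽²⁾)·(1 − m·cᵢ⁽²⁾/n⁽²⁾) + 2·[(cᵢ⁽³⁾/n⁽³⁾ − cᵢ⁽⁴⁾/n⁽⁴⁾)·π₃(G) + (cᵢ⁽⁴⁾/n⁽⁴⁾)·C(m,2)]`. -/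
theorem variance_monoEdges {V : Type*} [Fintype V] [DecidableEq V]
    (G : SimpleGraph V) [DecidableRel G.Adj] (n m s : ℕ)
    (hn : Fintype.card V = n) (hn4 : 4 ≤ n) (hm : G.edgeFinset.card = m)
    (c : Fin s → ℕ) (hc : ∀ i, 0 < c i) (hsum : ∑ i, c i = n) (i : Fin s) :
    expect V c (fun f =>
        ((monoEdges G f i : ℝ) - expect V c (fun g => (monoEdges G g i : ℝ))) ^ 2) =
      (m : ℝ) * (((c i).descFactorial 2 : ℝ) / (n.descFactorial 2 : ℝ)) *
          (1 - (m : ℝ) * ((c i).descFactorial 2 : ℝ) / (n.descFactorial 2 : ℝ)) +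
        2 * ((((c i).descFactorial 3 : ℝ) / (n.descFactorial 3 : ℝ) -
              ((c i).descFactorial 4 : ℝ) / (n.descFactorial 4 : ℝ)) * (pi3 G : ℝ) +
            ((c i).descFactorial 4 : ℝ) / (n.descFactorial 4 : ℝ) * (m.choose 2 : ℝ)) := by
  classical
  subst hn hm
  set n := Fintype.card V with hndef
  set m := G.edgeFinset.card with hmdef
  set Φ := profileColorings V s c with hΦ
  have hnem : Φ.Nonempty := profile_nonempty c hsum
  have hN : ((Φ.card : ℝ)) ≠ 0 := by
    have := Finset.card_pos.2 hnem
    exact_mod_cast this.ne'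
  set N : ℝ := (Φ.card : ℝ) with hNdef
  -- the key probability
  have hq : ∀ (S : Finset V) (k : ℕ), k ≤ 4 → S.card = k →
      ((Φ.filter fun f => ∀ v ∈ S, f v = i).card : ℝ)
        = N * (((c i).descFactorial k : ℝ) / (n.descFactorial k : ℝ)) := by
    intro S k hk hS
    have := cnt_real c i hS (le_trans hk hn4)
    rw [cnt] at this
    exact_mod_cast this
  have hdnz : ∀ k : ℕ, k ≤ 4 → ((n.descFactorial k : ℝ)) ≠ 0 := by
    intro k hk
    have : n.descFactorial k ≠ 0 := fun h0 => by
      have := Nat.descFactorial_eq_zero_iff_lt.1 h0; omega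
    exact_mod_cast this
  -- indicator decomposition
  have hmono : ∀ f : V → Fin s, (monoEdges G f i : ℝ)
      = ∑ e ∈ G.edgeFinset, (if ∀ v ∈ eS e, f v = i then (1:ℝ) else 0) := by
    intro f
    rw [monoEdges, Finset.card_filter, Nat.cast_sum]
    refine Finset.sum_congr rfl fun e _ => ?_
    by_cases h : ∀ v ∈ e, f v = i <;> simp [h, forall_mem_eS]
  -- first moment
  have hS1 : ∑ f ∈ Φ, (monoEdges G f i : ℝ)
      = (m : ℝ) * (N * (((c i).descFactorial 2 : ℝ) / (n.descFactorial 2 : ℝ))) := by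
    rw [Finset.sum_congr rfl fun f _ => hmono f, Finset.sum_comm]
    rw [Finset.sum_congr rfl fun e he => ?_]
    · rw [Finset.sum_const, nsmul_eq_mul, hmdef]
    · rw [Finset.sum_boole]
      exact hq (eS e) 2 (by norm_num) (card_eS G he)
  -- second moment
  have hsq : ∀ f : V → Fin s, (monoEdges G f i : ℝ)^2
      = ∑ p ∈ G.edgeFinset ×ˢ G.edgeFinset,
          (if ∀ v ∈ eS p.1 ∪ eS p.2, f v = i then (1:ℝ) else 0) := by
    intro f
    rw [sq, hmono f, Finset.sum_mul_sum]
    rw [← Finset.sum_product']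
    refine Finset.sum_congr rfl fun p _ => ?_
    rw [ite_zero_mul_ite_zero, one_mul]
    exact if_congr Finset.forall_mem_union.symm rfl rfl
  have hS2 : ∑ f ∈ Φ, (monoEdges G f i : ℝ)^2
      = ∑ p ∈ G.edgeFinset ×ˢ G.edgeFinset,
          ((Φ.filter fun f => ∀ v ∈ eS p.1 ∪ eS p.2, f v = i).card : ℝ) := by
    rw [Finset.sum_congr rfl fun f _ => hsq f, Finset.sum_comm]
    exact Finset.sum_congr rfl fun p _ => by rw [Finset.sum_boole]
  -- split the pair sum
  have hdiag : ∑ p ∈ G.edgeFinset.diag,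
      ((Φ.filter fun f => ∀ v ∈ eS p.1 ∪ eS p.2, f v = i).card : ℝ)
      = (m : ℝ) * (N * (((c i).descFactorial 2 : ℝ) / (n.descFactorial 2 : ℝ))) := by
    rw [Finset.sum_congr rfl fun p hp => ?_]
    · rw [Finset.sum_const, nsmul_eq_mul, Finset.diag_card, hmdef]
    · rw [Finset.mem_diag] at hp
      have hu : eS (V := V) p.2 = eS p.1 := by rw [← hp.2]
      rw [show eS (V := V) p.1 ∪ eS p.2 = eS p.1 by rw [hu, Finset.union_self]]
      exact hq (eS p.1) 2 (by norm_num) (card_eS G hp.1)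
  set sh : Sym2 V × Sym2 V → Prop := fun p => ∃ v, v ∈ p.1 ∧ v ∈ p.2 with hshdef
  set B : ℕ := ((G.edgeFinset.offDiag.filter fun p => ¬ sh p)).card with hBdef
  have hshare : ∑ p ∈ G.edgeFinset.offDiag.filter sh,
      ((Φ.filter fun f => ∀ v ∈ eS p.1 ∪ eS p.2, f v = i).card : ℝ)
      = (2 * pi3 G : ℝ) * (N * (((c i).descFactorial 3 : ℝ) / (n.descFactorial 3 : ℝ))) := by
    have hterm : ∀ p ∈ G.edgeFinset.offDiag.filter sh,
        ((Φ.filter fun f => ∀ v ∈ eS p.1 ∪ eS p.2, f v = i).card : ℝ)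
          = N * (((c i).descFactorial 3 : ℝ) / (n.descFactorial 3 : ℝ)) := by
      intro p hp
      rw [Finset.mem_filter, Finset.mem_offDiag] at hp
      exact hq _ 3 (by norm_num)
        (card_eS_union_shares G hp.1.1 hp.1.2.1 hp.1.2.2 hp.2)
    rw [Finset.sum_congr rfl hterm, Finset.sum_const, nsmul_eq_mul, share_pairs_card]
    push_cast
    ring
  have hdisj : ∑ p ∈ G.edgeFinset.offDiag.filter (fun p => ¬ sh p),
      ((Φ.filter fun f => ∀ v ∈ eS p.1 ∪ eS p.2, f v = i).card : ℝ)
      = (B : ℝ) * (N * (((c i).descFactorial 4 : ℝ) / (n.descFactorial 4 : ℝ))) := by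
    have hterm : ∀ p ∈ G.edgeFinset.offDiag.filter (fun p => ¬ sh p),
        ((Φ.filter fun f => ∀ v ∈ eS p.1 ∪ eS p.2, f v = i).card : ℝ)
          = N * (((c i).descFactorial 4 : ℝ) / (n.descFactorial 4 : ℝ)) := by
      intro p hp
      rw [Finset.mem_filter, Finset.mem_offDiag] at hp
      exact hq _ 4 (by norm_num)
        (card_eS_union_disj G hp.1.1 hp.1.2.1 hp.2)
    rw [Finset.sum_congr rfl hterm, Finset.sum_const, nsmul_eq_mul, hBdef]
  have hA : (G.edgeFinset.offDiag.filter sh).card = 2 * pi3 G := share_pairs_card G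
  have hAB : 2 * pi3 G + B = m * m - m := by
    rw [← hA, hBdef, Finset.card_filter_add_card_filter_not, Finset.offDiag_card]
  have hmle : m ≤ m * m := by nlinarith
  have h3 : 2 * pi3 G + B + m = m * m := by rw [hAB, Nat.sub_add_cancel hmle]
  have hBr : (B : ℝ) = (m : ℝ) * m - m - 2 * pi3 G := by
    have h4 : (2 * pi3 G : ℝ) + B + m = (m : ℝ) * m := by exact_mod_cast congrArg (Nat.cast : ℕ → ℝ) h3
    linarith
  have hS2' : ∑ f ∈ Φ, (monoEdges G f i : ℝ)^2
      = (m : ℝ) * (N * (((c i).descFactorial 2 : ℝ) / (n.descFactorial 2 : ℝ)))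
        + (2 * pi3 G : ℝ) * (N * (((c i).descFactorial 3 : ℝ) / (n.descFactorial 3 : ℝ)))
        + (B : ℝ) * (N * (((c i).descFactorial 4 : ℝ) / (n.descFactorial 4 : ℝ))) := by
    rw [hS2, ← Finset.diag_union_offDiag,
      Finset.sum_union (Finset.disjoint_diag_offDiag _), hdiag,
      ← Finset.sum_filter_add_sum_filter_not G.edgeFinset.offDiag sh, hshare, hdisj]
    ring
  -- the mean
  have hmean : expect V c (fun g => (monoEdges G g i : ℝ))
      = (m : ℝ) * (((c i).descFactorial 2 : ℝ) / (n.descFactorial 2 : ℝ)) := by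
    simp only [_root_.expect]
    rw [← hΦ, hS1, ← hNdef, mul_comm (m : ℝ), mul_assoc, mul_comm N, mul_div_assoc,
      div_self hN, mul_one]
    ring
  have hd2 := hdnz 2 (by norm_num)
  have hd3 := hdnz 3 (by norm_num)
  have hd4 := hdnz 4 (by norm_num)
  rw [hmean]
  simp only [_root_.expect]
  rw [← hΦ]
  set μ : ℝ := (m : ℝ) * (((c i).descFactorial 2 : ℝ) / (n.descFactorial 2 : ℝ)) with hμ
  have hexp : ∀ f : V → Fin s, ((monoEdges G f i : ℝ) - μ)^2
      = (monoEdges G f i : ℝ)^2 - (2*μ) * (monoEdges G f i : ℝ) + μ^2 := fun f => by ring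
  rw [Finset.sum_congr rfl fun f _ => hexp f]
  rw [Finset.sum_add_distrib, Finset.sum_sub_distrib, ← Finset.mul_sum, Finset.sum_const,
    nsmul_eq_mul, hS1, hS2', ← hNdef, hBr, Nat.cast_choose_two, hμ]
  set a2 : ℝ := ((c i).descFactorial 2 : ℝ)
  set a3 : ℝ := ((c i).descFactorial 3 : ℝ)
  set a4 : ℝ := ((c i).descFactorial 4 : ℝ)
  set d2 : ℝ := ((n.descFactorial 2 : ℕ) : ℝ)
  set d3 : ℝ := ((n.descFactorial 3 : ℕ) : ℝ)
  set d4 : ℝ := ((n.descFactorial 4 : ℕ) : ℝ)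
  field_simp
  ring
end

section
/- Let G be a finite simple graph on n ≥ 4 vertices with m edges, and let δ₁ = 2m/n and δ₂ = (Σ_v deg(v)²)/n be the first two moments of the degree distribution of G. Then γ(G) = (n/n^(4)) · ( ((2n−3)/(2n−2))·δ₁² + δ₁/2 − δ₂ ). -/
open Finset

lemma mem_inc {V : Type*} [Fintype V] [DecidableEq V] (G : SimpleGraph V) [DecidableRel G.Adj]
    (v : V) (e : Sym2 V) : e ∈ G.incidenceFinset v ↔ e ∈ G.edgeFinset ∧ v ∈ e := by
  simp [SimpleGraph.mem_incidenceFinset, SimpleGraph.incidenceSet, SimpleGraph.mem_edgeFinset]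

lemma pi3_eq {V : Type*} [Fintype V] [DecidableEq V] (G : SimpleGraph V) [DecidableRel G.Adj] :
    pi3 G = ∑ v, (G.degree v).choose 2 := by
  classical
  have hset : ((G.edgeFinset.powersetCard 2).filter fun p => ∃ v, ∀ e ∈ p, v ∈ e)
      = Finset.univ.biUnion fun v => (G.incidenceFinset v).powersetCard 2 := by
    ext p
    simp only [mem_filter, mem_powersetCard, mem_biUnion, mem_univ, true_and]
    constructor
    · rintro ⟨⟨hsub, hcard⟩, v, hv⟩
      exact ⟨v, fun e he => (mem_inc G v e).2 ⟨hsub he, hv e he⟩, hcard⟩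
    · rintro ⟨v, hsub, hcard⟩
      exact ⟨⟨fun e he => ((mem_inc G v e).1 (hsub he)).1, hcard⟩,
        v, fun e he => ((mem_inc G v e).1 (hsub he)).2⟩
  have hdisj : ∀ v ∈ (Finset.univ : Finset V), ∀ w ∈ (Finset.univ : Finset V), v ≠ w →
      Disjoint ((G.incidenceFinset v).powersetCard 2) ((G.incidenceFinset w).powersetCard 2) := by
    intro v _ w _ hvw
    rw [Finset.disjoint_left]
    intro p hpv hpw
    rw [mem_powersetCard] at hpv hpw
    obtain ⟨e, f, hef, hp⟩ := Finset.card_eq_two.1 hpv.2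
    have hev := ((mem_inc G v e).1 (hpv.1 (by simp [hp]))).2
    have hfv := ((mem_inc G v f).1 (hpv.1 (by simp [hp]))).2
    have hew := ((mem_inc G w e).1 (hpw.1 (by simp [hp]))).2
    have hfw := ((mem_inc G w f).1 (hpw.1 (by simp [hp]))).2
    have he : e = s(v,w) := (Sym2.mem_and_mem_iff hvw).1 ⟨hev, hew⟩
    have hf : f = s(v,w) := (Sym2.mem_and_mem_iff hvw).1 ⟨hfv, hfw⟩
    exact hef (he.trans hf.symm)
  rw [pi3, hset, Finset.card_biUnion hdisj]
  exact Finset.sum_congr rfl fun v _ => by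
    rw [Finset.card_powersetCard, G.card_incidenceFinset_eq_degree]

/-- With `δ₁ = 2m/n` and `δ₂ = (Σ_v deg(v)²)/n`,
`γ(G) = (n/n⁽⁴⁾) · (((2n−3)/(2n−2))·δ₁² + δ₁/2 − δ₂)`. -/
theorem gammaG_eq_degree_moments {V : Type*} [Fintype V] [DecidableEq V]
    (G : SimpleGraph V) [DecidableRel G.Adj] (n m : ℕ)
    (hn : Fintype.card V = n) (hn4 : 4 ≤ n) (hm : G.edgeFinset.card = m)
    (d1 d2 : ℝ) (hd1 : d1 = 2 * (m : ℝ) / (n : ℝ))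
    (hd2 : d2 = (∑ v, (G.degree v : ℝ) ^ 2) / (n : ℝ)) :
    gammaG G = (n : ℝ) / (n.descFactorial 4 : ℝ) *
      ((2 * (n : ℝ) - 3) / (2 * (n : ℝ) - 2) * d1 ^ 2 + d1 / 2 - d2) := by
  classical
  obtain ⟨k, rfl⟩ : ∃ k, n = k + 4 := ⟨n - 4, by omega⟩
  have hsum : (∑ v, (G.degree v : ℝ)) = 2 * m := by
    rw [← Nat.cast_sum]
    rw [G.sum_degrees_eq_twice_card_edges, hm]
    push_cast; ring
  have hpi : (pi3 G : ℝ) = ((∑ v, (G.degree v : ℝ) ^ 2) - 2 * m) / 2 := by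
    rw [pi3_eq, Nat.cast_sum]
    have : ∀ v : V, (((G.degree v).choose 2 : ℕ) : ℝ)
        = ((G.degree v : ℝ) ^ 2 - (G.degree v : ℝ)) / 2 := by
      intro v
      rw [Nat.cast_choose_two]
      ring
    rw [Finset.sum_congr rfl fun v _ => this v, ← Finset.sum_div,
      Finset.sum_sub_distrib, hsum]
  have h4 : (((k + 4).descFactorial 4 : ℕ) : ℝ) = (k + 4) * (k + 3) * (k + 2) * (k + 1) := by
    simp [Nat.descFactorial]; ring
  have h2 : (((k + 4).descFactorial 2 : ℕ) : ℝ) = (k + 4) * (k + 3) := by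
    simp [Nat.descFactorial]; ring
  have hch : ((m.choose 2 : ℕ) : ℝ) = m * (m - 1) / 2 := Nat.cast_choose_two (K := ℝ) m
  rw [gammaG, hn, hm, hpi, hch, h4, h2, hd1, hd2]
  have e0 : (k : ℝ) + 4 ≠ 0 := by positivity
  have e1 : (k : ℝ) + 3 ≠ 0 := by positivity
  have e2 : (k : ℝ) + 2 ≠ 0 := by positivity
  have e3 : (k : ℝ) + 1 ≠ 0 := by positivity
  have e4 : 2 * ((k : ℝ) + 4) - 2 ≠ 0 := by nlinarith [Nat.cast_nonneg (α := ℝ) k]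
  have e5 : (k : ℝ) + 4 - 1 ≠ 0 := by nlinarith [Nat.cast_nonneg (α := ℝ) k]
  push_cast
  field_simp
  ring
end

section
/- Let G be a finite simple graph on n ≥ 4 vertices that is d-regular for some integer d ≥ 0 (every vertex has degree d). Then γ(G) ≥ 0. -/
open Finset

/-- If `G` is a `d`-regular graph on `n ≥ 4` vertices then `γ(G) ≥ 0`. -/
theorem gammaG_nonneg_of_regular {V : Type*} [Fintype V] [DecidableEq V]
    (G : SimpleGraph V) [DecidableRel G.Adj] (n d : ℕ)
    (hn : Fintype.card V = n) (hn4 : 4 ≤ n) (hreg : ∀ v, G.degree v = d) :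
    0 ≤ gammaG G := by
  classical
  set m := G.edgeFinset.card with hm
  -- handshake
  have hdeg : n * d = 2 * m := by
    have h := G.sum_degrees_eq_twice_card_edges
    simp only [hreg] at h
    rw [Finset.sum_const, smul_eq_mul, Finset.card_univ, hn] at h
    exact h
  -- d < n
  have hne : Nonempty V := Fintype.card_pos_iff.mp (by omega)
  obtain ⟨v0⟩ := hne
  have hdn : d < n := by
    have := G.degree_lt_card_verts v0
    rw [hreg v0, hn] at this
    exact this
  -- pi3 bound
  have hpi3 : pi3 G ≤ n * d.choose 2 := by
    have hsub : ((G.edgeFinset.powersetCard 2).filter fun p => ∃ v, ∀ e ∈ p, v ∈ e)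
        ⊆ Finset.univ.biUnion (fun v => (G.incidenceFinset v).powersetCard 2) := by
      intro p hp
      simp only [Finset.mem_filter, Finset.mem_powersetCard] at hp
      obtain ⟨⟨hpe, hpc⟩, v, hv⟩ := hp
      refine Finset.mem_biUnion.mpr ⟨v, Finset.mem_univ _, ?_⟩
      rw [Finset.mem_powersetCard]
      refine ⟨fun e he => ?_, hpc⟩
      rw [SimpleGraph.mem_incidenceFinset]
      exact ⟨(SimpleGraph.mem_edgeFinset).mp (hpe he), hv e he⟩
    calc pi3 G ≤ (Finset.univ.biUnion
            (fun v => (G.incidenceFinset v).powersetCard 2)).card :=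
          Finset.card_le_card hsub
      _ ≤ ∑ v, ((G.incidenceFinset v).powersetCard 2).card := Finset.card_biUnion_le
      _ = ∑ v : V, (G.degree v).choose 2 := by
          simp only [Finset.card_powersetCard, SimpleGraph.card_incidenceFinset_eq_degree]
      _ = n * d.choose 2 := by
          rw [Finset.sum_congr rfl fun v _ => by rw [hreg v], Finset.sum_const,
            smul_eq_mul, Finset.card_univ, hn]
  -- reals
  have hN4 : (4:ℝ) ≤ (n:ℝ) := by exact_mod_cast hn4
  have hM0 : (0:ℝ) ≤ (m:ℝ) := Nat.cast_nonneg _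
  have hD0 : (0:ℝ) ≤ (d:ℝ) := Nat.cast_nonneg _
  have hND : (n:ℝ) * (d:ℝ) = 2 * (m:ℝ) := by exact_mod_cast hdeg
  have hDle : (d:ℝ) ≤ (n:ℝ) - 1 := by
    have : (d:ℝ) + 1 ≤ (n:ℝ) := by exact_mod_cast hdn
    linarith
  have hπ : (pi3 G : ℝ) ≤ (n:ℝ) * ((d:ℝ) * ((d:ℝ) - 1) / 2) := by
    have h2 : ((pi3 G : ℕ) : ℝ) ≤ ((n * d.choose 2 : ℕ) : ℝ) := by exact_mod_cast hpi3
    rw [Nat.cast_mul, Nat.cast_choose_two] at h2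
    exact h2
  have h1n : (1:ℕ) ≤ n := by omega
  have h2n : (2:ℕ) ≤ n := by omega
  have h3n : (3:ℕ) ≤ n := by omega
  have hD4 : ((n.descFactorial 4 : ℕ) : ℝ) = (n:ℝ) * ((n:ℝ)-1) * ((n:ℝ)-2) * ((n:ℝ)-3) := by
    have h : n.descFactorial 4 = (n-3) * ((n-2) * ((n-1) * (n * 1))) := by
      simp [Nat.descFactorial_succ, Nat.descFactorial_zero]
    rw [h]
    push_cast [Nat.cast_sub h1n, Nat.cast_sub h2n, Nat.cast_sub h3n]
    ring
  have hD2 : ((n.descFactorial 2 : ℕ) : ℝ) = (n:ℝ) * ((n:ℝ)-1) := by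
    have h : n.descFactorial 2 = (n-1) * (n * 1) := by
      simp [Nat.descFactorial_succ, Nat.descFactorial_zero]
    rw [h]
    push_cast [Nat.cast_sub h1n]
    ring
  have hN0 : (0:ℝ) < (n:ℝ) := by linarith
  have hN1 : (0:ℝ) < (n:ℝ) - 1 := by linarith
  have hN2 : (0:ℝ) < (n:ℝ) - 2 := by linarith
  have hN3 : (0:ℝ) < (n:ℝ) - 3 := by linarith
  have hD4pos : (0:ℝ) < (n:ℝ) * ((n:ℝ)-1) * ((n:ℝ)-2) * ((n:ℝ)-3) :=
    mul_pos (mul_pos (mul_pos hN0 hN1) hN2) hN3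
  have hD2pos : (0:ℝ) < (n:ℝ) * ((n:ℝ)-1) := mul_pos hN0 hN1
  -- key inequalities
  have hA : (m:ℝ) * ((m:ℝ) + 1 - 2*(d:ℝ))
      ≤ 2 * ((m:ℝ) * ((m:ℝ) - 1) / 2 - (pi3 G : ℝ)) := by
    nlinarith [hπ, hND]
  have hB : (m:ℝ) * ((n:ℝ)-2) * ((n:ℝ)-3)
      ≤ ((m:ℝ) + 1 - 2*(d:ℝ)) * ((n:ℝ) * ((n:ℝ)-1)) := by
    have hid : ((m:ℝ) + 1 - 2*(d:ℝ)) * ((n:ℝ) * ((n:ℝ)-1))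
        - (m:ℝ) * ((n:ℝ)-2) * ((n:ℝ)-3) = (n:ℝ) * ((n:ℝ) - 1 - (d:ℝ)) := by
      linear_combination (3 - 2*(n:ℝ)) * hND
    nlinarith [mul_nonneg (le_of_lt hN0) (by linarith : (0:ℝ) ≤ (n:ℝ) - 1 - (d:ℝ))]
  have key : (m:ℝ)^2 * ((n:ℝ) * ((n:ℝ)-1) * ((n:ℝ)-2) * ((n:ℝ)-3))
      ≤ 2 * ((m:ℝ) * ((m:ℝ) - 1) / 2 - (pi3 G : ℝ)) * ((n:ℝ) * ((n:ℝ)-1))^2 := by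
    have h1 : (m:ℝ) * ((n:ℝ) * ((n:ℝ)-1)) * ((m:ℝ) * ((n:ℝ)-2) * ((n:ℝ)-3))
        ≤ (m:ℝ) * ((n:ℝ) * ((n:ℝ)-1)) * (((m:ℝ) + 1 - 2*(d:ℝ)) * ((n:ℝ) * ((n:ℝ)-1))) :=
      mul_le_mul_of_nonneg_left hB (mul_nonneg hM0 (le_of_lt hD2pos))
    have h2 : (m:ℝ) * ((m:ℝ) + 1 - 2*(d:ℝ)) * ((n:ℝ) * ((n:ℝ)-1))^2
        ≤ 2 * ((m:ℝ) * ((m:ℝ) - 1) / 2 - (pi3 G : ℝ)) * ((n:ℝ) * ((n:ℝ)-1))^2 :=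
      mul_le_mul_of_nonneg_right hA (sq_nonneg _)
    linarith [h1, h2]
  -- assemble
  rw [gammaG, hn, ← hm, Nat.cast_choose_two, hD4, hD2]
  have hrw : 2 / ((n:ℝ) * ((n:ℝ)-1) * ((n:ℝ)-2) * ((n:ℝ)-3))
        * ((m:ℝ) * ((m:ℝ)-1) / 2 - (pi3 G : ℝ))
      - ((m:ℝ) / ((n:ℝ) * ((n:ℝ)-1)))^2
      = (2 * ((m:ℝ) * ((m:ℝ)-1) / 2 - (pi3 G : ℝ)) * ((n:ℝ) * ((n:ℝ)-1))^2
          - (m:ℝ)^2 * ((n:ℝ) * ((n:ℝ)-1) * ((n:ℝ)-2) * ((n:ℝ)-3)))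
        / (((n:ℝ) * ((n:ℝ)-1) * ((n:ℝ)-2) * ((n:ℝ)-3)) * ((n:ℝ) * ((n:ℝ)-1))^2) := by
    field_simp
  rw [hrw]
  apply div_nonneg
  · linarith [key]
  · positivity
end

section
/- Let m ≥ 2 be an even integer and let G be a perfect matching on 2m vertices (m pairwise vertex-disjoint edges covering all vertices). Under the random coloring model with profile (m, m), for every integer k with 0 ≤ k ≤ m/2, P( M_1 ≥ k ) = ( 2^m (m!)² / (2m)! ) · Σ_{t=k}^{m/2} ( m! / ( t!·t!·(m−2t)! ) )·2^{−2t}. -/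
open Finset

namespace MT

lemma fin2_cases : ∀ x : Fin 2, x = 0 ∨ x = 1 := by decide
lemma fin2_not0 : ∀ x : Fin 2, (¬ x = 0) ↔ x = 1 := by decide
lemma fin2_not1 : ∀ x : Fin 2, (¬ x = 1) ↔ x = 0 := by decide

variable {V : Type*} [Fintype V] [DecidableEq V]
variable {p : V → V} {R : Finset V}

lemma mem_profile {m : ℕ} (f : V → Fin 2) :
    f ∈ profileColorings V 2 (fun _ => m) ↔
      ∀ i, (univ.filter fun v => f v = i).card = m := by
  simp [profileColorings]

lemma mem_profile_of_zero {m : ℕ} (hcard : Fintype.card V = 2 * m) (f : V → Fin 2)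
    (hf : (univ.filter fun v => f v = 0).card = m) :
    f ∈ profileColorings V 2 (fun _ => m) := by
  rw [mem_profile, Fin.forall_fin_two]
  refine ⟨hf, ?_⟩
  have h := Finset.card_filter_add_card_filter_not (s := (univ : Finset V))
    (p := fun v => f v = 0)
  simp only [Finset.card_univ, hcard] at h
  have e : (univ.filter fun v => f v = 1) = (univ.filter fun v => ¬ f v = 0) := by
    apply Finset.filter_congr; intro v _; simp [fin2_not0]
  rw [e]; omega

section basic
variable (hpp : ∀ v, p (p v) = v) (hR : ∀ v, v ∈ R ↔ p v ∉ R)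

include hpp in
lemma pinj : Function.Injective p := Function.LeftInverse.injective hpp

include hpp hR in
lemma mem_img_iff (T : Finset V) (r : V) : p r ∈ T.image p ↔ r ∈ T := by
  constructor
  · rintro h
    rw [Finset.mem_image] at h
    obtain ⟨x, hx, hxe⟩ := h
    rwa [← pinj hpp hxe]
  · intro h; exact Finset.mem_image_of_mem p h

include hR in
lemma disj_img (T : Finset V) (hT : T ⊆ R) : Disjoint R (T.image p) := by
  rw [Finset.disjoint_left]
  intro v hv hvimg
  rw [Finset.mem_image] at hvimg
  obtain ⟨x, hx, rfl⟩ := hvimg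
  exact (hR x).1 (hT hx) hv

variable {m : ℕ} (hcard : Fintype.card V = 2 * m)
variable {A B C : Finset V}

-- the "mixed-1" part
include hpp hR in
lemma S_mem_of_R (hA : A ⊆ R) (hB : B ⊆ R \ A) (hC : C ⊆ R \ (A ∪ B))
    {r : V} (hr : r ∈ R) :
    (r ∈ ((A ∪ A.image p) ∪ C) ∪ ((R \ ((A ∪ B) ∪ C)).image p)) ↔ (r ∈ A ∨ r ∈ C) := by
  have h1 : r ∉ A.image p := Finset.disjoint_left.1 (disj_img hR A hA) hr
  have h2 : r ∉ (R \ ((A ∪ B) ∪ C)).image p :=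
    Finset.disjoint_left.1 (disj_img hR _ (Finset.sdiff_subset)) hr
  simp only [Finset.mem_union]
  tauto

include hpp hR in
lemma S_mem_of_p (hA : A ⊆ R) (hB : B ⊆ R \ A) (hC : C ⊆ R \ (A ∪ B))
    {r : V} (hr : r ∈ R) :
    (p r ∈ ((A ∪ A.image p) ∪ C) ∪ ((R \ ((A ∪ B) ∪ C)).image p))
      ↔ (r ∈ A ∨ r ∈ R \ ((A ∪ B) ∪ C)) := by
  have hpr : p r ∉ R := (hR r).1 hr
  have h1 : p r ∉ A := fun h => hpr (hA h)
  have h2 : p r ∉ C := fun h => hpr ((Finset.sdiff_subset) (hC h))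
  rw [Finset.mem_union, Finset.mem_union, Finset.mem_union,
    mem_img_iff hpp hR, mem_img_iff hpp hR]
  tauto

include hpp hR in
lemma card_S (hA : A ⊆ R) (hB : B ⊆ R \ A) (hC : C ⊆ R \ (A ∪ B))
    (hAB : A.card = B.card) (hRcard : R.card = m) :
    (((A ∪ A.image p) ∪ C) ∪ ((R \ ((A ∪ B) ∪ C)).image p)).card = m := by
  have hBR : B ⊆ R := hB.trans Finset.sdiff_subset
  have hCR : C ⊆ R := hC.trans Finset.sdiff_subset
  have hdAB : Disjoint A B := by
    rw [Finset.disjoint_left]; intro a ha hb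
    exact (Finset.mem_sdiff.1 (hB hb)).2 ha
  have hdABC : Disjoint (A ∪ B) C := by
    rw [Finset.disjoint_right]; intro a ha hb
    exact (Finset.mem_sdiff.1 (hC ha)).2 hb
  have hABCR : (A ∪ B) ∪ C ⊆ R := Finset.union_subset (Finset.union_subset hA hBR) hCR
  have d1 : Disjoint A (A.image p) := (disj_img hR A hA).mono_left hA
  have d2 : Disjoint (A ∪ A.image p) C := by
    refine Finset.disjoint_union_left.2 ⟨?_, ?_⟩
    · exact (hdABC.mono_left Finset.subset_union_left).symm.symm |>.mono_left le_rfl |>.symm.symm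
    · exact ((disj_img hR A hA).mono_left hCR).symm
  have d3 : Disjoint ((A ∪ A.image p) ∪ C) ((R \ ((A ∪ B) ∪ C)).image p) := by
    refine Finset.disjoint_union_left.2 ⟨Finset.disjoint_union_left.2 ⟨?_, ?_⟩, ?_⟩
    · exact (disj_img hR _ Finset.sdiff_subset).mono_left hA
    · rw [Finset.disjoint_image (pinj hpp)]
      rw [Finset.disjoint_left]; intro a ha hmem
      exact (Finset.mem_sdiff.1 hmem).2 (Finset.mem_union_left _ (Finset.mem_union_left _ ha))
    · exact (disj_img hR _ Finset.sdiff_subset).mono_left hCR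
  rw [Finset.card_union_of_disjoint d3, Finset.card_union_of_disjoint d2,
    Finset.card_union_of_disjoint d1,
    Finset.card_image_of_injective _ (pinj hpp), Finset.card_image_of_injective _ (pinj hpp),
    Finset.card_sdiff_of_subset hABCR,
    Finset.card_union_of_disjoint hdABC, Finset.card_union_of_disjoint hdAB, hRcard]
  have hle : (A ∪ B ∪ C).card ≤ m := by
    rw [← hRcard]; exact Finset.card_le_card hABCR
  rw [Finset.card_union_of_disjoint hdABC, Finset.card_union_of_disjoint hdAB] at hle
  omega
end basic
-- continuation: inner_card
-- context: same variables
section inner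
variable (hpp : ∀ v, p (p v) = v) (hR : ∀ v, v ∈ R ↔ p v ∉ R)
variable {m : ℕ}

include hpp hR in
lemma inner_card (hcard : Fintype.card V = 2 * m) (hRcard : R.card = m)
    {A B : Finset V} (hA : A ⊆ R) (hB : B ⊆ R \ A) (hAB : A.card = B.card) :
    ((profileColorings V 2 fun _ => m).filter fun f =>
        (R.filter fun r => f r = 0 ∧ f (p r) = 0) = A ∧
        (R.filter fun r => f r = 1 ∧ f (p r) = 1) = B).card
      = 2 ^ (R \ (A ∪ B)).card := by
  classical
  rw [← Finset.card_powerset]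
  have hBR : B ⊆ R := hB.trans Finset.sdiff_subset
  apply Finset.card_nbij' (fun f => (R \ (A ∪ B)).filter fun r => f r = 0)
    (fun C v => if v ∈ ((A ∪ A.image p) ∪ C) ∪ ((R \ ((A ∪ B) ∪ C)).image p) then 0 else 1)
  · intro f _
    rw [Finset.mem_coe, Finset.mem_powerset]
    exact Finset.filter_subset _ _
  · -- j maps into the set
    intro C hC
    rw [Finset.mem_coe, Finset.mem_powerset] at hC
    set jC : V → Fin 2 := fun v =>
      if v ∈ ((A ∪ A.image p) ∪ C) ∪ ((R \ ((A ∪ B) ∪ C)).image p) then 0 else 1 with hjC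
    have hval0 : ∀ v, jC v = 0 ↔
        v ∈ ((A ∪ A.image p) ∪ C) ∪ ((R \ ((A ∪ B) ∪ C)).image p) := by
      intro v
      show (if v ∈ ((A ∪ A.image p) ∪ C) ∪ ((R \ ((A ∪ B) ∪ C)).image p)
          then (0 : Fin 2) else 1) = 0 ↔ _
      by_cases h : v ∈ ((A ∪ A.image p) ∪ C) ∪ ((R \ ((A ∪ B) ∪ C)).image p)
      · constructor
        · intro _; exact h
        · intro _; simp only [if_pos h]
      · constructor
        · intro h' ; rw [if_neg h] at h'; exact absurd h' (by decide)
        · intro h'; exact absurd h' h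
    have hval1 : ∀ v, jC v = 1 ↔
        v ∉ ((A ∪ A.image p) ∪ C) ∪ ((R \ ((A ∪ B) ∪ C)).image p) := by
      intro v; rw [← fin2_not0, hval0]
    rw [Finset.mem_coe, Finset.mem_filter]
    have hCdisj : ∀ r ∈ C, r ∉ A ∧ r ∉ B := by
      intro r hr
      have := Finset.mem_sdiff.1 (hC hr)
      simp only [Finset.mem_union] at this
      tauto
    refine ⟨?_, ?_, ?_⟩
    · -- jC ∈ Φ
      apply mem_profile_of_zero hcard
      have e : (univ.filter fun v => jC v = 0)
          = ((A ∪ A.image p) ∪ C) ∪ ((R \ ((A ∪ B) ∪ C)).image p) := by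
        ext v; rw [Finset.mem_filter]; rw [hval0]; simp
      rw [e]
      exact card_S hpp hR hA hB hC hAB hRcard
    · -- mono0 = A
      ext r
      rw [Finset.mem_filter]
      constructor
      · rintro ⟨hr, h0, hp0⟩
        rw [hval0, S_mem_of_R hpp hR hA hB hC hr] at h0
        rw [hval0, S_mem_of_p hpp hR hA hB hC hr] at hp0
        rcases h0 with h0 | h0
        · exact h0
        · rcases hp0 with hp0 | hp0
          · exact hp0
          · exact absurd (Finset.mem_union_right _ h0) (Finset.mem_sdiff.1 hp0).2
      · intro hrA
        have hr : r ∈ R := hA hrA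
        refine ⟨hr, ?_, ?_⟩
        · rw [hval0, S_mem_of_R hpp hR hA hB hC hr]; exact Or.inl hrA
        · rw [hval0, S_mem_of_p hpp hR hA hB hC hr]; exact Or.inl hrA
    · -- mono1 = B
      ext r
      rw [Finset.mem_filter]
      constructor
      · rintro ⟨hr, h1, hp1⟩
        rw [hval1, S_mem_of_R hpp hR hA hB hC hr] at h1
        rw [hval1, S_mem_of_p hpp hR hA hB hC hr] at hp1
        push_neg at h1 hp1
        by_contra hrB
        have hrX : r ∈ R \ ((A ∪ B) ∪ C) := by
          simp only [Finset.mem_sdiff, Finset.mem_union]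
          tauto
        exact hp1.2 hrX
      · intro hrB
        have hr : r ∈ R := hBR hrB
        have hrnA : r ∉ A := (Finset.mem_sdiff.1 (hB hrB)).2
        have hrnC : r ∉ C := fun h => (hCdisj r h).2 hrB
        have hrnX : r ∉ R \ ((A ∪ B) ∪ C) := by
          simp only [Finset.mem_sdiff, Finset.mem_union]
          tauto
        refine ⟨hr, ?_, ?_⟩
        · rw [hval1, S_mem_of_R hpp hR hA hB hC hr]; tauto
        · rw [hval1, S_mem_of_p hpp hR hA hB hC hr]; tauto
  · -- left inverse
    intro f hf
    rw [Finset.mem_coe, Finset.mem_filter] at hf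
    obtain ⟨hfP, hfA, hfB⟩ := hf
    have hAiff : ∀ x : V, x ∈ A ↔ x ∈ R ∧ (f x = 0 ∧ f (p x) = 0) := fun x => by
      rw [← hfA, Finset.mem_filter]
    have hBiff : ∀ x : V, x ∈ B ↔ x ∈ R ∧ (f x = 1 ∧ f (p x) = 1) := fun x => by
      rw [← hfB, Finset.mem_filter]
    set C := (R \ (A ∪ B)).filter fun r => f r = 0 with hCdef
    have hC : C ⊆ R \ (A ∪ B) := Finset.filter_subset _ _
    funext v
    have hSmem : v ∈ ((A ∪ A.image p) ∪ C) ∪ ((R \ ((A ∪ B) ∪ C)).image p) ↔ f v = 0 := by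
      by_cases hv : v ∈ R
      · rw [S_mem_of_R hpp hR hA hB hC hv]
        constructor
        · rintro (h | h)
          · exact ((hAiff v).1 h).2.1
          · exact (Finset.mem_filter.1 h).2
        · intro h0
          rcases fin2_cases (f (p v)) with hp0 | hp1
          · left; exact (hAiff v).2 ⟨hv, h0, hp0⟩
          · right
            rw [hCdef, Finset.mem_filter, Finset.mem_sdiff, Finset.mem_union]
            refine ⟨⟨hv, ?_⟩, h0⟩
            rintro (hA' | hB')
            · have := ((hAiff v).1 hA').2.2
              simp [hp1] at this
            · have := ((hBiff v).1 hB').2.1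
              simp [h0] at this
      · -- v ∉ R
        have hr : p v ∈ R := by
          by_contra hc
          rw [hR (p v), hpp] at hc; push_neg at hc; exact hv hc
        have hmem : (v ∈ ((A ∪ A.image p) ∪ C) ∪ ((R \ ((A ∪ B) ∪ C)).image p)) ↔
            (p v ∈ A ∨ p v ∈ R \ ((A ∪ B) ∪ C)) := by
          conv_lhs => rw [show v = p (p v) from (hpp v).symm]
          exact S_mem_of_p hpp hR hA hB hC hr
        rw [hmem]
        have hfpp : f (p (p v)) = f v := by rw [hpp]
        constructor
        · rintro (h | h)
          · have := ((hAiff _).1 h).2.2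
            rwa [hfpp] at this
          · simp only [Finset.mem_sdiff, Finset.mem_union] at h
            obtain ⟨hRr, hnot⟩ := h
            push_neg at hnot
            obtain ⟨⟨hnA, hnB⟩, hnC⟩ := hnot
            rcases fin2_cases (f v) with h0 | h1
            · exact h0
            exfalso
            rcases fin2_cases (f (p v)) with hr0 | hr1
            · apply hnC
              rw [hCdef, Finset.mem_filter, Finset.mem_sdiff, Finset.mem_union]
              exact ⟨⟨hRr, by tauto⟩, hr0⟩
            · apply hnB
              refine (hBiff _).2 ⟨hRr, hr1, ?_⟩
              rwa [hfpp]
        · intro h0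
          rcases fin2_cases (f (p v)) with hr0 | hr1
          · left
            refine (hAiff _).2 ⟨hr, hr0, ?_⟩
            rwa [hfpp]
          · right
            simp only [Finset.mem_sdiff, Finset.mem_union]
            refine ⟨hr, ?_⟩
            push_neg
            refine ⟨⟨?_, ?_⟩, ?_⟩
            · intro hA'
              have := ((hAiff _).1 hA').2.1
              simp [hr1] at this
            · intro hB'
              have := ((hBiff _).1 hB').2.2
              rw [hfpp] at this
              simp [h0] at this
            · intro hC'
              have := (Finset.mem_filter.1 hC').2
              simp [hr1] at this
    beta_reduce
    split
    · next h => exact (hSmem.1 h).symm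
    · next h =>
      have := mt hSmem.2 h
      rw [fin2_not0] at this
      exact this.symm
  · -- right inverse
    intro C hC
    rw [Finset.mem_coe, Finset.mem_powerset] at hC
    ext r
    rw [Finset.mem_filter]
    constructor
    · rintro ⟨hr, h0⟩
      have hrR : r ∈ R := (Finset.mem_sdiff.1 hr).1
      have h0' : (if r ∈ ((A ∪ A.image p) ∪ C) ∪ ((R \ ((A ∪ B) ∪ C)).image p)
          then (0 : Fin 2) else 1) = 0 := h0
      have hS : r ∈ ((A ∪ A.image p) ∪ C) ∪ ((R \ ((A ∪ B) ∪ C)).image p) := by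
        by_contra hc
        rw [if_neg hc] at h0'
        exact absurd h0' (by decide)
      have : r ∈ A ∨ r ∈ C := (S_mem_of_R hpp hR hA hB hC hrR).1 hS
      rcases this with h | h
      · exact absurd (Finset.mem_union_left _ h) (Finset.mem_sdiff.1 hr).2
      · exact h
    · intro h
      have hr : r ∈ R \ (A ∪ B) := hC h
      have hrR : r ∈ R := (Finset.mem_sdiff.1 hr).1
      refine ⟨hr, ?_⟩
      have hS : r ∈ ((A ∪ A.image p) ∪ C) ∪ ((R \ ((A ∪ B) ∪ C)).image p) := by
        rw [S_mem_of_R hpp hR hA hB hC hrR]; exact Or.inr h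
      show (if r ∈ ((A ∪ A.image p) ∪ C) ∪ ((R \ ((A ∪ B) ∪ C)).image p)
          then (0 : Fin 2) else 1) = 0
      rw [if_pos hS]
end inner
section cnt
variable (hpp : ∀ v, p (p v) = v) (hR : ∀ v, v ∈ R ↔ p v ∉ R) {m : ℕ}

include hpp hR in
lemma image_p_R : R.image p = univ \ R := by
  ext v
  simp only [Finset.mem_image, Finset.mem_sdiff, Finset.mem_univ, true_and]
  constructor
  · rintro ⟨r, hr, rfl⟩; exact (hR r).1 hr
  · intro hv
    exact ⟨p v, by rw [hR (p v), hpp]; simpa, hpp v⟩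

include hpp hR in
lemma card_R {m : ℕ} (hcard : Fintype.card V = 2 * m) : R.card = m := by
  have h1 : (R.image p).card = R.card := Finset.card_image_of_injective _ (pinj hpp)
  rw [image_p_R hpp hR] at h1
  have h2 : (univ \ R).card = Fintype.card V - R.card := by
    rw [Finset.card_sdiff_of_subset (Finset.subset_univ R), Finset.card_univ]
  have h3 : R.card ≤ Fintype.card V := by
    rw [← Finset.card_univ]; exact Finset.card_le_card (Finset.subset_univ R)
  omega

include hpp hR in
lemma filter_split (P : V → Prop) [DecidablePred P] :
    (univ.filter P).card = (R.filter P).card + (R.filter fun r => P (p r)).card := by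
  have h := Finset.card_filter_add_card_filter_not (s := univ.filter P)
    (p := fun v => v ∈ R)
  rw [Finset.filter_filter, Finset.filter_filter] at h
  have e1 : (univ.filter fun v => P v ∧ v ∈ R) = R.filter P := by
    ext v; simp [and_comm]
  have e2 : (univ.filter fun v => P v ∧ v ∉ R) = (R.filter fun r => P (p r)).image p := by
    ext v
    simp only [Finset.mem_filter, Finset.mem_univ, true_and, Finset.mem_image]
    constructor
    · rintro ⟨hPv, hv⟩
      refine ⟨p v, ⟨?_, by rwa [hpp]⟩, hpp v⟩
      rw [hR (p v), hpp]; simpa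
    · rintro ⟨r, ⟨hr, hPr⟩, rfl⟩
      exact ⟨hPr, (hR r).1 hr⟩
  rw [e1, e2, Finset.card_image_of_injective _ (pinj hpp)] at h
  omega

include hpp hR in
lemma ab_eq {m : ℕ} (hcard : Fintype.card V = 2 * m) (f : V → Fin 2)
    (hf : (univ.filter fun v => f v = 0).card = m) :
    (R.filter fun r => f r = 0 ∧ f (p r) = 0).card
      = (R.filter fun r => f r = 1 ∧ f (p r) = 1).card ∧
    2 * (R.filter fun r => f r = 0 ∧ f (p r) = 0).card ≤ m := by
  classical
  set a := (R.filter fun r => f r = 0 ∧ f (p r) = 0).card with ha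
  set b := (R.filter fun r => f r = 1 ∧ f (p r) = 1).card with hb
  set c := (R.filter fun r => f r = 0 ∧ f (p r) = 1).card with hc
  set d := (R.filter fun r => f r = 1 ∧ f (p r) = 0).card with hd
  have hsplit0 : (R.filter fun r => f r = 0).card = a + c := by
    have h := Finset.card_filter_add_card_filter_not
      (s := R.filter fun r => f r = 0) (p := fun r => f (p r) = 0)
    rw [Finset.filter_filter, Finset.filter_filter] at h
    have e : (R.filter fun r => f r = 0 ∧ ¬ f (p r) = 0)
        = (R.filter fun r => f r = 0 ∧ f (p r) = 1) := by
      apply Finset.filter_congr; intro v _; simp [fin2_not0]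
    rw [e] at h; omega
  have hsplit1 : (R.filter fun r => f r = 1).card = b + d := by
    have h := Finset.card_filter_add_card_filter_not
      (s := R.filter fun r => f r = 1) (p := fun r => f (p r) = 1)
    rw [Finset.filter_filter, Finset.filter_filter] at h
    have e : (R.filter fun r => f r = 1 ∧ ¬ f (p r) = 1)
        = (R.filter fun r => f r = 1 ∧ f (p r) = 0) := by
      apply Finset.filter_congr; intro v _; simp [fin2_not1]
    rw [e] at h; omega
  have hsplitp : (R.filter fun r => f (p r) = 0).card = a + d := by
    have h := Finset.card_filter_add_card_filter_not
      (s := R.filter fun r => f (p r) = 0) (p := fun r => f r = 0)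
    rw [Finset.filter_filter, Finset.filter_filter] at h
    have e1 : (R.filter fun r => f (p r) = 0 ∧ f r = 0)
        = (R.filter fun r => f r = 0 ∧ f (p r) = 0) := by
      apply Finset.filter_congr; intro v _; simp [and_comm]
    have e2 : (R.filter fun r => f (p r) = 0 ∧ ¬ f r = 0)
        = (R.filter fun r => f r = 1 ∧ f (p r) = 0) := by
      apply Finset.filter_congr; intro v _; simp [fin2_not0, and_comm]
    rw [e1, e2] at h; omega
  have hRtot : a + c + (b + d) = m := by
    have h := Finset.card_filter_add_card_filter_not
      (s := R) (p := fun r => f r = 0)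
    have e : (R.filter fun r => ¬ f r = 0) = (R.filter fun r => f r = 1) := by
      apply Finset.filter_congr; intro v _; simp [fin2_not0]
    rw [e, hsplit0, hsplit1, card_R hpp hR hcard] at h
    omega
  have hfib : a + c + (a + d) = m := by
    have h := filter_split hpp hR (fun v => f v = 0)
    rw [hf, hsplit0, hsplitp] at h; omega
  omega



include hpp hR in
lemma count_mono (hcard : Fintype.card V = 2 * m) (hRcard : R.card = m) (t : ℕ) :
    ((profileColorings V 2 fun _ => m).filter fun f =>
        (R.filter fun r => f r = 0 ∧ f (p r) = 0).card = t).card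
      = m.choose t * ((m - t).choose t * 2 ^ (m - 2 * t)) := by
  classical
  rw [Finset.card_eq_sum_card_fiberwise
    (f := fun f => R.filter fun r => f r = 0 ∧ f (p r) = 0)
    (t := R.powersetCard t)
    (by
      intro f hf
      rw [Finset.mem_coe, Finset.mem_filter] at hf
      rw [Finset.mem_coe, Finset.mem_powersetCard]
      exact ⟨Finset.filter_subset _ _, hf.2⟩)]
  have hterm : ∀ A ∈ R.powersetCard t,
      (((profileColorings V 2 fun _ => m).filter fun f =>
          (R.filter fun r => f r = 0 ∧ f (p r) = 0).card = t).filter fun f =>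
          (R.filter fun r => f r = 0 ∧ f (p r) = 0) = A).card
        = (m - t).choose t * 2 ^ (m - 2 * t) := by
    intro A hA
    rw [Finset.mem_powersetCard] at hA
    obtain ⟨hAsub, hAcard⟩ := hA
    have e1 : (((profileColorings V 2 fun _ => m).filter fun f =>
          (R.filter fun r => f r = 0 ∧ f (p r) = 0).card = t).filter fun f =>
          (R.filter fun r => f r = 0 ∧ f (p r) = 0) = A)
        = ((profileColorings V 2 fun _ => m).filter fun f =>
          (R.filter fun r => f r = 0 ∧ f (p r) = 0) = A) := by
      rw [Finset.filter_filter]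
      apply Finset.filter_congr
      intro f _
      constructor
      · exact fun h => h.2
      · intro h; exact ⟨by rw [h, hAcard], h⟩
    rw [e1]
    rw [Finset.card_eq_sum_card_fiberwise
      (f := fun f => R.filter fun r => f r = 1 ∧ f (p r) = 1)
      (t := (R \ A).powersetCard t)
      (by
        intro f hf
        rw [Finset.mem_coe, Finset.mem_filter] at hf
        obtain ⟨hfP, hfA⟩ := hf
        rw [Finset.mem_coe, Finset.mem_powersetCard]
        constructor
        · intro r hr
          rw [Finset.mem_filter] at hr
          rw [Finset.mem_sdiff]
          refine ⟨hr.1, ?_⟩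
          intro hrA
          have h0 : f r = 0 := by
            rw [← hfA] at hrA
            exact (Finset.mem_filter.1 hrA).2.1
          have h1 : f r = 1 := hr.2.1
          rw [h0] at h1
          exact absurd h1 (by decide)
        · have hab := ab_eq hpp hR hcard f ((mem_profile f).1 hfP 0)
          rw [hfA, hAcard] at hab
          exact hab.1.symm)]
    have hterm2 : ∀ B ∈ (R \ A).powersetCard t,
        ((((profileColorings V 2 fun _ => m)).filter fun f =>
            ((R.filter fun r => f r = 0 ∧ f (p r) = 0) = A)).filter fun f =>
            (R.filter fun r => f r = 1 ∧ f (p r) = 1) = B).card = 2 ^ (m - 2 * t) := by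
      intro B hB
      rw [Finset.mem_powersetCard] at hB
      obtain ⟨hBsub, hBcard⟩ := hB
      rw [Finset.filter_filter]
      have hABdisj : Disjoint A B := by
        rw [Finset.disjoint_right]
        intro a ha hb
        exact (Finset.mem_sdiff.1 (hBsub ha)).2 hb
      have hABsub : A ∪ B ⊆ R :=
        Finset.union_subset hAsub (hBsub.trans Finset.sdiff_subset)
      have hcardAB : (R \ (A ∪ B)).card = m - 2 * t := by
        rw [Finset.card_sdiff_of_subset hABsub, Finset.card_union_of_disjoint hABdisj, hRcard,
          hAcard, hBcard]
        omega
      rw [inner_card hpp hR hcard hRcard hAsub hBsub (by rw [hAcard, hBcard]), hcardAB]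
    rw [Finset.sum_congr rfl hterm2, Finset.sum_const, smul_eq_mul,
      Finset.card_powersetCard, Finset.card_sdiff_of_subset hAsub, hRcard, hAcard]
  rw [Finset.sum_congr rfl hterm, Finset.sum_const, smul_eq_mul,
    Finset.card_powersetCard, hRcard]

end cnt


lemma mem_profile_zero {m : ℕ} (f : V → Fin 2) (hf : f ∈ profileColorings V 2 (fun _ => m)) :
    (univ.filter fun v => f v = 0).card = m := (mem_profile f).1 hf 0


lemma card_profile {m : ℕ} (hcard : Fintype.card V = 2 * m) :
    (profileColorings V 2 (fun _ => m)).card = (2 * m).choose m := by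
  have : (profileColorings V 2 (fun _ => m)).card = ((univ : Finset V).powersetCard m).card := by
    apply Finset.card_nbij' (fun f => univ.filter fun v => f v = 0)
      (fun S v => if v ∈ S then 0 else 1)
    · intro f hf
      rw [Finset.mem_coe, Finset.mem_powersetCard]
      exact ⟨Finset.filter_subset _ _, mem_profile_zero f hf⟩
    · intro S hS
      rw [Finset.mem_coe, Finset.mem_powersetCard] at hS
      apply mem_profile_of_zero hcard
      have : (univ.filter fun v => (if v ∈ S then (0:Fin 2) else 1) = 0) = S := by
        ext v; simp only [Finset.mem_filter, Finset.mem_univ, true_and]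
        split <;> simp_all
      rw [this]; exact hS.2
    · intro f _
      funext v
      simp only [Finset.mem_filter, Finset.mem_univ, true_and]
      rcases fin2_cases (f v) with h | h <;> simp [h]
    · intro S _
      ext v; simp only [Finset.mem_filter, Finset.mem_univ, true_and]
      split <;> simp_all
  rw [this, Finset.card_powersetCard, Finset.card_univ, hcard]


section m
variable {p : V → V} {R : Finset V}
variable (G : SimpleGraph V) [DecidableRel G.Adj]
variable (hpp : ∀ v, p (p v) = v) (hR : ∀ v, v ∈ R ↔ p v ∉ R)
variable (hadj : ∀ v, G.Adj v (p v)) (huniq : ∀ v w, G.Adj v w → w = p v)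

include hpp hR hadj huniq in
lemma mono_eq (f : V → Fin 2) :
    monoEdges G f 0 = (R.filter fun r => f r = 0 ∧ f (p r) = 0).card := by
  classical
  symm
  unfold monoEdges
  refine Finset.card_bij (fun r _ => s(r, p r)) ?_ ?_ ?_
  · intro r hr
    simp only [Finset.mem_filter] at hr
    simp only [Finset.mem_filter, SimpleGraph.mem_edgeFinset, SimpleGraph.mem_edgeSet]
    refine ⟨hadj r, ?_⟩
    intro v hv
    rw [Sym2.mem_iff] at hv
    rcases hv with rfl | rfl
    · exact hr.2.1
    · exact hr.2.2
  · intro r hr r' hr' h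
    simp only [Finset.mem_filter] at hr hr'
    replace h := (Sym2.mk_eq_mk_iff (p := (r, p r)) (q := (r', p r'))).1 h
    rcases h with h | h
    · exact congrArg Prod.fst h
    · -- swapped: r = p r'
      exfalso
      have h1 : r = p r' := congrArg Prod.fst h
      have := (hR r').1 hr'.1
      rw [← h1] at this
      exact this hr.1
  · intro e he
    simp only [Finset.mem_filter, SimpleGraph.mem_edgeFinset, SimpleGraph.mem_edgeSet] at he
    induction e with
    | _ v w =>
      have hadjvw : G.Adj v w := he.1
      have hw : w = p v := huniq v w hadjvw
      have hfv : f v = 0 := he.2 v (by simp)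
      have hfw : f w = 0 := he.2 w (by simp)
      by_cases hv : v ∈ R
      · refine ⟨v, ?_, by rw [hw]⟩
        simp only [Finset.mem_filter]
        exact ⟨hv, hfv, hw ▸ hfw⟩
      · have hpv : p v ∈ R := by
          by_contra hc
          rw [hR (p v), hpp] at hc
          push_neg at hc
          exact hv hc
        refine ⟨w, ?_, ?_⟩
        · simp only [Finset.mem_filter]
          rw [hw]
          exact ⟨hpv, hw ▸ hfw, by rw [hpp]; exact hfv⟩
        · rw [hw, hpp]
          exact Sym2.eq_swap

end m

section tail
variable (hpp : ∀ v, p (p v) = v) (hR : ∀ v, v ∈ R ↔ p v ∉ R) {m : ℕ}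

include hpp hR in
lemma tail_count (G : SimpleGraph V) [DecidableRel G.Adj]
    (hadj : ∀ v, G.Adj v (p v)) (huniq : ∀ v w, G.Adj v w → w = p v)
    (hcard : Fintype.card V = 2 * m) (hRcard : R.card = m) (k : ℕ) :
    ((profileColorings V 2 fun _ => m).filter fun f => k ≤ monoEdges G f 0).card
      = ∑ t ∈ Finset.Icc k (m / 2), m.choose t * ((m - t).choose t * 2 ^ (m - 2 * t)) := by
  classical
  have hmono : ∀ f : V → Fin 2,
      monoEdges G f 0 = (R.filter fun r => f r = 0 ∧ f (p r) = 0).card :=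
    mono_eq G hpp hR hadj huniq
  rw [Finset.card_eq_sum_card_fiberwise
    (f := fun f => monoEdges G f 0) (t := Finset.Icc k (m / 2))
    (by
      intro f hf
      rw [Finset.mem_coe, Finset.mem_filter] at hf
      show monoEdges G f 0 ∈ Finset.Icc k (m / 2)
      rw [Finset.mem_Icc]
      refine ⟨hf.2, ?_⟩
      rw [hmono]
      have := (ab_eq hpp hR hcard f ((mem_profile f).1 hf.1 0)).2
      omega)]
  apply Finset.sum_congr rfl
  intro t ht
  rw [Finset.mem_Icc] at ht
  have e1 : (((profileColorings V 2 fun _ => m).filter fun f =>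
        k ≤ monoEdges G f 0).filter fun f => monoEdges G f 0 = t)
      = ((profileColorings V 2 fun _ => m).filter fun f =>
        (R.filter fun r => f r = 0 ∧ f (p r) = 0).card = t) := by
    rw [Finset.filter_filter]
    apply Finset.filter_congr
    intro f _
    rw [hmono]
    constructor
    · exact fun h => h.2
    · intro h; exact ⟨by omega, h⟩
  rw [e1, count_mono hpp hR hcard hRcard t]
end tail

end MT

/-- For a perfect matching on `2m` vertices (`m ≥ 2` even), under the random coloring model
with profile `(m, m)`, for `0 ≤ k ≤ m/2`:
`P(M₁ ≥ k) = (2^m (m!)²/(2m)!) · Σ_{t=k}^{m/2} (m!/(t!·t!·(m−2t)!))·2^{−2t}`. -/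
theorem matching_tail_probability {V : Type*} [Fintype V] [DecidableEq V]
    (G : SimpleGraph V) [DecidableRel G.Adj] (m : ℕ) (hm2 : 2 ≤ m) (hmeven : Even m)
    (hcard : Fintype.card V = 2 * m) (hmatch : ∀ v, ∃! w, G.Adj v w)
    (k : ℕ) (hk : k ≤ m / 2) :
    (((profileColorings V 2 (fun _ => m)).filter (fun f => k ≤ monoEdges G f 0)).card : ℝ) /
        ((profileColorings V 2 (fun _ => m)).card : ℝ) =
      (2 ^ m * (m.factorial : ℝ) ^ 2 / ((2 * m).factorial : ℝ)) *
        ∑ t ∈ Finset.Icc k (m / 2),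
          (m.factorial : ℝ) / ((t.factorial : ℝ) * (t.factorial : ℝ) *
            ((m - 2 * t).factorial : ℝ)) * ((2 : ℝ) ^ (2 * t))⁻¹ := by
  classical
  -- the partner function
  set p : V → V := fun v => (hmatch v).choose with hp
  have hadj : ∀ v, G.Adj v (p v) := fun v => (hmatch v).choose_spec.1
  have huniq : ∀ v w, G.Adj v w → w = p v := fun v w h => (hmatch v).choose_spec.2 w h
  have hpp : ∀ v, p (p v) = v := by
    intro v
    exact (huniq (p v) v (hadj v).symm).symm
  have hpne : ∀ v, p v ≠ v := fun v h => G.irrefl (h ▸ hadj v)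
  -- the set of representatives
  set σ : V ≃ Fin (Fintype.card V) := Fintype.equivFin V with hσ
  set R : Finset V := univ.filter (fun v => σ v < σ (p v)) with hRdef
  have hR : ∀ v, v ∈ R ↔ p v ∉ R := by
    intro v
    have hne : (σ v : ℕ) ≠ (σ (p v) : ℕ) := by
      intro h
      exact hpne v (σ.injective (Fin.val_injective h)).symm
    simp only [hRdef, Finset.mem_filter, Finset.mem_univ, true_and, hpp, Fin.lt_def]
    omega
  have hRcard : R.card = m := MT.card_R hpp hR hcard
  rw [MT.tail_count hpp hR G hadj huniq hcard hRcard k, MT.card_profile hcard]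
  have hcc : ((2 * m).choose m : ℝ) ≠ 0 := by
    apply Nat.cast_ne_zero.mpr
    exact (Nat.choose_pos (by omega)).ne'
  push_cast
  rw [Finset.sum_div, Finset.mul_sum]
  apply Finset.sum_congr rfl
  intro t ht
  rw [Finset.mem_Icc] at ht
  have ht2 : 2 * t ≤ m := by omega
  have htm : t ≤ m := by omega
  have htmt : t ≤ m - t := by omega
  have e1 : (m.choose t : ℝ) = m.factorial / (t.factorial * (m - t).factorial) :=
    Nat.cast_choose ℝ htm
  have e2 : ((m - t).choose t : ℝ)
      = (m - t).factorial / (t.factorial * (m - 2 * t).factorial) := by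
    rw [Nat.cast_choose ℝ htmt, show m - t - t = m - 2 * t by omega]
  have e3 : ((2 * m).choose m : ℝ)
      = (2 * m).factorial / (m.factorial * m.factorial) := by
    rw [Nat.cast_choose ℝ (by omega : m ≤ 2 * m), show 2 * m - m = m by omega]
  have e4 : (2 : ℝ) ^ (m - 2 * t) = 2 ^ m * ((2 : ℝ) ^ (2 * t))⁻¹ := by
    rw [← div_eq_mul_inv, eq_div_iff (by positivity), ← pow_add]
    congr 1
    omega
  have n1 : (t.factorial : ℝ) ≠ 0 := Nat.cast_ne_zero.mpr t.factorial_ne_zero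
  have n2 : ((m - t).factorial : ℝ) ≠ 0 := Nat.cast_ne_zero.mpr (m - t).factorial_ne_zero
  have n3 : ((m - 2 * t).factorial : ℝ) ≠ 0 :=
    Nat.cast_ne_zero.mpr (m - 2 * t).factorial_ne_zero
  have n4 : (m.factorial : ℝ) ≠ 0 := Nat.cast_ne_zero.mpr m.factorial_ne_zero
  have n5 : ((2 * m).factorial : ℝ) ≠ 0 := Nat.cast_ne_zero.mpr (2 * m).factorial_ne_zero
  have n6 : (2 : ℝ) ^ (2 * t) ≠ 0 := by positivity
  have n7 : (2 : ℝ) ^ (m - 2 * t) ≠ 0 := by positivity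
  rw [e1, e2, e3, e4]
  field_simp
end
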